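/- arXiv:math/0202061 — 2 statements merged into one kernel-verified Lean document; each statement's English description precedes it below -/
import Mathlib

section
/- Let n ≥ 2 and k ≥ 1 be integers and set N = 2n+1. Let λ(i,r,s) ∈ ℂ be an arbitrary family of coefficients, for 0 ≤ i ≤ 2n and 1 ≤ r,s ≤ k. Let H be a finite-dimensional complex inner product space, let U_0 = Id_H, let U_1, …, U_{2n} be unitary operators on H, and let ξ_1, …, ξ_k ∈ H. Then there exist an integer m ≥ 1, unitary matrices u_1, …, u_n, v_1, …, v_n in U(m), and vectors η_1, …, η_k ∈ ℂ^{m·m} such that, denoting by W_0, W_1, …, W_{2n} the associated tensor-form unitaries, the following hold: (i) Σ_{a=1}^k ‖η_a‖² = (N² − N) · Σ_{a=1}^k ‖ξ_a‖², and (ii) Σ_{r=1}^k ‖ Σ_{i=0}^{2n} Σ_{s=1}^k λ(i,r,s) · (U_i ξ_s) ‖² ≤ Σ_{r=1}^k ‖ Σ_{i=0}^{2n} Σ_{s=1}^k λ(i,r,s) · (W_i η_s) ‖². (This is the concrete finite-dimensional content of the paper's main Theorem: for the element X = Σ_{i,r,s} λ(i,r,s) W_i ⊗ e_{r,s} of 𝒳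 ⊗ M_k(ℂ), where 𝒳 ⊂ C*(F_{2n}) is spanned by the identity and the 2n free generators, it yields ‖X‖_{C*(F_{2n})} ≤ (N² − N)^{1/2} ‖X‖_min, since by residual finiteness of C*(F_{2n}) the left-hand quantities over normalized ξ compute ‖X‖²_{C*(F_{2n})} while the min tensor norm dominates the normalized right-hand quantities.) -/
/-!
Split `ℂ^m = ℂ^(n+1) ⊗ ℂ^(d+1)`, `d = dim H`, into `n + 1` blocks, embed `H` isometrically into block `0`
by a map `ψ`, and let `u_j = v_j` be the permutation unitary exchanging block `0` with block
`j + 1`. Take `η_s = C • (e_z ⊗ ψ ξ_s)` with `z` in block `0` and `C² = N² - N`. Then `W_0 η`,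
`(u_j ⊗ 1) η` and `(1 ⊗ v_j) η` live on the disjoint coordinate sets `{z} × block 0`,
`{u_j z} × block 0` and `{z} × block (j + 1)`, so the right-hand side is exactly
`C² Σ_r Σ_i ‖Σ_s λ(i,r,s) ξ_s‖²`. By Cauchy–Schwarz the left-hand side is at most `N` times
the same sum, and `N ≤ N² - N`.
-/

open scoped BigOperators

/-- The standard Hermitian inner product on `ℂ^ι`, linear in the first variable
and conjugate-linear in the second. -/
noncomputable def cInner {ι : Type*} [Fintype ι] (x y : ι → ℂ) : ℂ :=
  ∑ t, x t * (starRingEnd ℂ) (y t)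

/-- The tensor-form unitaries `W_0 = 1`, `W_i = u_i ⊗ 1` (for `1 ≤ i ≤ n`) and
`W_{n+i} = 1 ⊗ v_i` (for `1 ≤ i ≤ n`) associated with unitary `m × m` matrices
`u_1, …, u_n, v_1, …, v_n`, acting on `ℂ^m ⊗ ℂ^m = ℂ^{m·m}`. -/
noncomputable def tensorFormUnitaries (n m : ℕ)
    (u v : Fin n → Matrix.unitaryGroup (Fin m) ℂ) :
    Fin (2 * n + 1) → Matrix (Fin m × Fin m) (Fin m × Fin m) ℂ := fun i =>
  if _h0 : (i : ℕ) = 0 then 1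
  else if _hn : (i : ℕ) ≤ n then
    Matrix.kroneckerMap (· * ·)
      ((u ⟨(i : ℕ) - 1, by omega⟩ : Matrix (Fin m) (Fin m) ℂ))
      (1 : Matrix (Fin m) (Fin m) ℂ)
  else
    Matrix.kroneckerMap (· * ·)
      (1 : Matrix (Fin m) (Fin m) ℂ)
      ((v ⟨(i : ℕ) - n - 1, by have := i.isLt; omega⟩ : Matrix (Fin m) (Fin m) ℂ))

open Finset Matrix Equiv

lemma sum_norm_sq_sum_of_pairwise_disjoint {ι τ E : Type*} [Fintype ι] [Fintype τ]
    [SeminormedAddCommGroup E] (g : ι → τ → E)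
    (hg : ∀ i i' t, g i t ≠ 0 → g i' t ≠ 0 → i = i') :
    ∑ t, ‖∑ i, g i t‖ ^ 2 = ∑ i, ∑ t, ‖g i t‖ ^ 2 := by
  rw [sum_comm]
  refine sum_congr rfl fun t _ => ?_
  by_cases h : ∃ i, g i t ≠ 0
  · obtain ⟨i, hi⟩ := h
    have hzero : ∀ i', i' ≠ i → g i' t = 0 := fun i' hi' => by
      by_contra h'
      exact hi' (hg i' i t h' hi)
    rw [Fintype.sum_eq_single i hzero,
      Fintype.sum_eq_single i fun i' hi' => by simp [hzero i' hi']]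
  · simp_all

lemma norm_sum_sq_le_card_mul {ι E : Type*} [Fintype ι] [SeminormedAddCommGroup E]
    (y : ι → E) : ‖∑ i, y i‖ ^ 2 ≤ Fintype.card ι * ∑ i, ‖y i‖ ^ 2 :=
  (pow_le_pow_left₀ (norm_nonneg _) (norm_sum_le _ _) 2).trans (sq_sum_le_card_mul_sum_sq ..)

lemma sum_comp_extend_zero {α ι R M : Type*} [Fintype α] [Fintype ι] [Zero R]
    [AddCommMonoid M] {κ : α → ι} (hκ : Function.Injective κ) (v : α → R) {F : R → M}
    (hF : F 0 = 0) : ∑ t, F (Function.extend κ v 0 t) = ∑ p, F (v p) := by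
  classical
  calc ∑ t, F (Function.extend κ v 0 t)
      = ∑ t ∈ univ.map ⟨κ, hκ⟩, F (Function.extend κ v 0 t) := by
        refine (sum_subset (subset_univ _) fun t _ ht => ?_).symm
        rw [Function.extend_apply' _ _ _ fun ⟨p, hp⟩ => ht (by simp [← hp]), Pi.zero_apply, hF]
    _ = ∑ p, F (v p) := by simp [hκ.extend_apply]

lemma exists_linearMap_sum_norm_sq_eq (H : Type*) [NormedAddCommGroup H]
    [InnerProductSpace ℂ H] [FiniteDimensional ℂ H] {ι : Type*} [Fintype ι]
    (κ : Fin (Module.finrank ℂ H) ↪ ι) :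
    ∃ ψ : H →ₗ[ℂ] ι → ℂ,
      (∀ x, ∑ t, ‖ψ x t‖ ^ 2 = ‖x‖ ^ 2) ∧ ∀ x t, ψ x t ≠ 0 → t ∈ Set.range κ := by
  let b := stdOrthonormalBasis ℂ H
  refine ⟨Function.ExtendByZero.linearMap ℂ κ ∘ₗ (WithLp.linearEquiv 2 ℂ _).toLinearMap ∘ₗ
    b.repr.toLinearMap, fun x => ?_, fun x t hx => ?_⟩
  · simp only [LinearMap.comp_apply, Function.ExtendByZero.linearMap_apply]
    rw [sum_comp_extend_zero κ.injective _ (F := fun z : ℂ => ‖z‖ ^ 2) (by simp),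
      ← b.repr.norm_map, EuclideanSpace.norm_eq, Real.sq_sqrt (by positivity)]
    rfl
  · by_contra ht
    exact hx (by simp [Function.extend_apply' _ _ _ ht])

lemma permMatrix_mem_unitaryGroup {ι R : Type*} [Fintype ι] [DecidableEq ι] [CommRing R]
    [StarRing R] (σ : Perm ι) : σ.permMatrix R ∈ unitaryGroup ι R := by
  rw [mem_unitaryGroup_iff, star_eq_conjTranspose, conjTranspose_permMatrix, ← permMatrix_mul,
    inv_mul_cancel, permMatrix_one]

lemma one_eq_permMatrix_one_inv {ι R : Type*} [DecidableEq ι] [Zero R] [One R] :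
    (1 : Matrix ι ι R) = (1 : Perm ι)⁻¹.permMatrix R := by
  simp

lemma kroneckerMap_permMatrix_mulVec_apply {ι κ R : Type*} [Fintype ι] [Fintype κ]
    [DecidableEq ι] [DecidableEq κ] [CommRing R] (α : Perm ι) (β : Perm κ) (x : ι × κ → R)
    (t : ι × κ) :
    (kroneckerMap (· * ·) (α⁻¹.permMatrix R) (β⁻¹.permMatrix R) *ᵥ x) t
      = x (α.symm t.1, β.symm t.2) := by
  simp [mulVec, dotProduct, Fintype.sum_prod_type, Perm.inv_def, PEquiv.toMatrix_apply]

@[simps]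
def deltaTensor {ι κ R : Type*} [DecidableEq ι] [Semiring R] (a : ι) :
    (κ → R) →ₗ[R] ι × κ → R where
  toFun f t := if t.1 = a then f t.2 else 0
  map_add' f g := by ext t; split_ifs <;> simp [*]
  map_smul' c f := by ext t; split_ifs <;> simp [*]

lemma kroneckerMap_permMatrix_mulVec_deltaTensor {ι κ R : Type*} [Fintype ι] [Fintype κ]
    [DecidableEq ι] [DecidableEq κ] [CommRing R] (α : Perm ι) (β : Perm κ) (a : ι)
    (f : κ → R) :
    kroneckerMap (· * ·) (α⁻¹.permMatrix R) (β⁻¹.permMatrix R) *ᵥ deltaTensor a f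
      = deltaTensor (α a) (f ∘ β.symm) := by
  ext t
  simp [kroneckerMap_permMatrix_mulVec_apply, Equiv.symm_apply_eq]

lemma sum_norm_sq_deltaTensor {ι κ R : Type*} [Fintype ι] [Fintype κ] [DecidableEq ι]
    [SeminormedRing R] (a : ι) (f : κ → R) : ∑ t, ‖deltaTensor a f t‖ ^ 2 = ∑ s, ‖f s‖ ^ 2 := by
  simp [Fintype.sum_prod_type, apply_ite]

/-- The unitary `e_s ↦ e_{σ s}`. -/
def permUnitary {m : ℕ} (σ : Perm (Fin m)) : unitaryGroup (Fin m) ℂ :=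
  ⟨σ⁻¹.permMatrix ℂ, permMatrix_mem_unitaryGroup _⟩

lemma coe_permUnitary {m : ℕ} (σ : Perm (Fin m)) :
    (permUnitary σ : Matrix (Fin m) (Fin m) ℂ) = σ⁻¹.permMatrix ℂ := rfl

-- The only `i` for which `W_i (e_z ⊗ f)`, with `f` supported in block `0`, can be nonzero at `t`:
-- the block pairs `(0, 0)`, `(j + 1, 0)`, `(0, j + 1)` of `t` are labelled `0`, `j + 1`, `n + j + 1`.
def blockLabel {m : ℕ} (n : ℕ) (block : Fin m → Fin (n + 1)) (t : Fin m × Fin m) : ℕ :=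
  block t.1 + if block t.2 = 0 then 0 else n + block t.2

section Blocks

variable {n m : ℕ} {block : Fin m → Fin (n + 1)} {σ : Fin n → Perm (Fin m)}

lemma exists_tensorFormUnitaries_mulVec_deltaTensor
    (hσ : ∀ j t, block t = 0 → block (σ j t) = j.succ) {z : Fin m} (hz : block z = 0)
    (i : Fin (2 * n + 1)) :
    ∃ (a : Fin m) (β : Perm (Fin m)),
      (∀ f, tensorFormUnitaries n m (permUnitary ∘ σ) (permUnitary ∘ σ) i *ᵥ deltaTensor z f
        = deltaTensor a (f ∘ β.symm)) ∧
      ∀ s, block s = 0 → blockLabel n block (a, β s) = i := by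
  unfold tensorFormUnitaries
  split_ifs with h0 hn
  · exact ⟨z, 1, fun f => by rw [one_mulVec]; rfl, fun s hs => by simp [blockLabel, hz, hs, h0]⟩
  · refine ⟨σ ⟨i - 1, by omega⟩ z, 1, fun f => ?_, fun s hs => ?_⟩
    · rw [Function.comp_apply, coe_permUnitary, one_eq_permMatrix_one_inv,
        kroneckerMap_permMatrix_mulVec_deltaTensor]
    · simp [blockLabel, hσ _ _ hz, hs]
      omega
  · refine ⟨z, σ ⟨i - n - 1, by omega⟩, fun f => ?_, fun s hs => ?_⟩
    · rw [Function.comp_apply, coe_permUnitary, one_eq_permMatrix_one_inv,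
        kroneckerMap_permMatrix_mulVec_deltaTensor]
      rfl
    · simp [blockLabel, hσ _ _ hs, hz]
      omega

lemma sum_norm_sq_sum_tensorFormUnitaries_mulVec_deltaTensor
    (hσ : ∀ j t, block t = 0 → block (σ j t) = j.succ) {z : Fin m} (hz : block z = 0)
    (f : Fin (2 * n + 1) → Fin m → ℂ) (hf : ∀ i s, f i s ≠ 0 → block s = 0) :
    ∑ t, ‖∑ i, (tensorFormUnitaries n m (permUnitary ∘ σ) (permUnitary ∘ σ) i
        *ᵥ deltaTensor z (f i)) t‖ ^ 2 = ∑ i, ∑ s, ‖f i s‖ ^ 2 := by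
  choose a β hW hlabel using exists_tensorFormUnitaries_mulVec_deltaTensor hσ hz
  simp only [hW]
  have hsupp : ∀ i t, deltaTensor (a i) (f i ∘ (β i).symm) t ≠ 0 →
      blockLabel n block t = i := by
    rintro i ⟨t₁, t₂⟩ ht
    obtain ⟨rfl, hft⟩ : t₁ = a i ∧ f i ((β i).symm t₂) ≠ 0 := by simpa using ht
    simpa using hlabel i _ (hf i _ hft)
  rw [sum_norm_sq_sum_of_pairwise_disjoint _ fun i i' t hi hi' =>
    Fin.ext ((hsupp i t hi).symm.trans (hsupp i' t hi'))]
  refine sum_congr rfl fun i _ => ?_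
  rw [sum_norm_sq_deltaTensor]
  exact Equiv.sum_comp (β i).symm fun s => ‖f i s‖ ^ 2

end Blocks

lemma exists_tensorFormUnitaries_isometric_embedding (n : ℕ) (H : Type*)
    [NormedAddCommGroup H] [InnerProductSpace ℂ H] [FiniteDimensional ℂ H] :
    ∃ m, 1 ≤ m ∧ ∃ (u : Fin n → unitaryGroup (Fin m) ℂ) (Φ : H →ₗ[ℂ] Fin m × Fin m → ℂ),
      (∀ x, ∑ t, ‖Φ x t‖ ^ 2 = ‖x‖ ^ 2) ∧
      ∀ x : Fin (2 * n + 1) → H,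
        ∑ t, ‖∑ i, (tensorFormUnitaries n m u u i *ᵥ Φ (x i)) t‖ ^ 2 = ∑ i, ‖x i‖ ^ 2 := by
  set d := Module.finrank ℂ H
  let e : Fin (n + 1) × Fin (d + 1) ≃ Fin ((n + 1) * (d + 1)) := finProdFinEquiv
  let block t := (e.symm t).1
  let σ : Fin n → Perm _ := fun j => e.permCongr ((swap 0 j.succ).prodCongr (.refl _))
  have hσ : ∀ j t, block t = 0 → block (σ j t) = j.succ := by
    intro j t ht
    simp [block, σ, Equiv.permCongr_apply, ht]
  obtain ⟨ψ, hψ, hψ_range⟩ := exists_linearMap_sum_norm_sq_eq H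
    ((Fin.castSuccEmb.trans (Function.Embedding.sectR 0 _)).trans e.toEmbedding)
  have hψ_block : ∀ x t, ψ x t ≠ 0 → block t = 0 := fun x t h => by
    obtain ⟨p, rfl⟩ := hψ_range x t h
    simp [block]
  refine ⟨(n + 1) * (d + 1), Nat.one_le_iff_ne_zero.mpr (by positivity), permUnitary ∘ σ,
    deltaTensor (e (0, 0)) ∘ₗ ψ, fun x => ?_, fun x => ?_⟩
  · rw [LinearMap.comp_apply, sum_norm_sq_deltaTensor, hψ]
  · simp only [LinearMap.comp_apply]
    rw [sum_norm_sq_sum_tensorFormUnitaries_mulVec_deltaTensor hσ (by simp [block]) _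
      fun i => hψ_block (x i)]
    simp [hψ]

theorem statement0_general (n k : ℕ) (hn : 2 ≤ n)
    (lam : Fin (2 * n + 1) → Fin k → Fin k → ℂ)
    (H : Type*) [NormedAddCommGroup H] [InnerProductSpace ℂ H] [FiniteDimensional ℂ H]
    (U : Fin (2 * n + 1) → H ≃ₗᵢ[ℂ] H)
    (ξ : Fin k → H) :
    ∃ (m : ℕ), 1 ≤ m ∧
      ∃ (u v : Fin n → Matrix.unitaryGroup (Fin m) ℂ)
        (η : Fin k → (Fin m × Fin m) → ℂ),
        (∑ a, ∑ t, ‖η a t‖ ^ 2) =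
          ((2 * n + 1 : ℝ) ^ 2 - (2 * n + 1)) * ∑ a, ‖ξ a‖ ^ 2 ∧
        ∑ r, ‖∑ i, ∑ s, lam i r s • U i (ξ s)‖ ^ 2 ≤
          ∑ r, ∑ t,
            ‖∑ i, ∑ s, lam i r s * (tensorFormUnitaries n m u v i).mulVec (η s) t‖ ^ 2 := by
  obtain ⟨m, hm, u, Φ, hΦ, hW⟩ := exists_tensorFormUnitaries_isometric_embedding n H
  set N : ℝ := 2 * n + 1
  have hN : N ≤ N ^ 2 - N := by
    have : (2 : ℝ) ≤ n := by exact_mod_cast hn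
    nlinarith
  set C : ℝ := √(N ^ 2 - N)
  have hC : C ^ 2 = N ^ 2 - N := Real.sq_sqrt ((by positivity : (0 : ℝ) ≤ N).trans hN)
  refine ⟨m, hm, u, u, fun s => (C : ℂ) • Φ (ξ s), ?_, sum_le_sum fun r _ => ?_⟩
  · simp [mul_pow, ← mul_sum, hΦ, hC]
  set X : Fin (2 * n + 1) → H := fun i => ∑ s, lam i r s • ξ s
  calc ‖∑ i, ∑ s, lam i r s • U i (ξ s)‖ ^ 2 = ‖∑ i, U i (X i)‖ ^ 2 := by simp [X]
    _ ≤ N * ∑ i, ‖X i‖ ^ 2 := by simpa [N] using norm_sum_sq_le_card_mul fun i => U i (X i)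
    _ ≤ C ^ 2 * ∑ i, ‖X i‖ ^ 2 := by rw [hC]; gcongr
    _ = ∑ t, ‖(C : ℂ) * ∑ i, (tensorFormUnitaries n m u u i *ᵥ Φ (X i)) t‖ ^ 2 := by
      simp [mul_pow, ← mul_sum, hW]
    _ = _ := by
      congr! 3 with t
      simp [X, mulVec_sum, mulVec_smul, mul_sum, mul_left_comm]

/-- the concrete finite-dimensional content of the main theorem,
`‖X‖_{C*(F_{2n})} ≤ (N² − N)^{1/2} ‖X‖_min` with `N = 2n + 1`. -/
theorem statement0 (n k : ℕ) (hn : 2 ≤ n) (hk : 1 ≤ k)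
    (lam : Fin (2 * n + 1) → Fin k → Fin k → ℂ)
    (H : Type*) [NormedAddCommGroup H] [InnerProductSpace ℂ H] [FiniteDimensional ℂ H]
    (U : Fin (2 * n + 1) → H ≃ₗᵢ[ℂ] H)
    (hU0 : U 0 = LinearIsometryEquiv.refl ℂ H)
    (ξ : Fin k → H) :
    ∃ (m : ℕ), 1 ≤ m ∧
      ∃ (u v : Fin n → Matrix.unitaryGroup (Fin m) ℂ)
        (η : Fin k → (Fin m × Fin m) → ℂ),
        (∑ a, ∑ t, ‖η a t‖ ^ 2) =
          ((2 * n + 1 : ℝ) ^ 2 - (2 * n + 1)) * ∑ a, ‖ξ a‖ ^ 2 ∧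
        ∑ r, ‖∑ i, ∑ s, lam i r s • U i (ξ s)‖ ^ 2 ≤
          ∑ r, ∑ t,
            ‖∑ i, ∑ s, lam i r s * (tensorFormUnitaries n m u v i).mulVec (η s) t‖ ^ 2 :=
  statement0_general n k hn lam H U ξ
end

section
/- (Lemma 1, finite-dimensional form: direct sums of triplets in tensor position are in tensor position.) Let n ≥ 1 and k ≥ 1 be integers and let Λ be a finite index set. Suppose that for each α ∈ Λ we are given an integer m_α ≥ 1, unitary matrices u_1^α, …, u_n^α, v_1^α, …, v_n^α in U(m_α) with associated tensor-form unitaries W_0^α, …, W_{2n}^α, vectors η_1^α, …, η_k^α ∈ ℂ^{m_α·m_α}, and complex numbers μ_1^α, …, μ_k^α. Then there exist an integer M ≥ 1, unitary matrices u_1, …, u_n, v_1, …, v_n in U(M), and vectors η_1, …, η_k ∈ ℂ^{M·M} such that, denoting by W_0, …, W_{2n} the associated tensor-form unitaries, for all 0 ≤ i, j ≤ 2n and all 1 ≤ a, b ≤ k one has ⟨W_i η_a, W_j η_b⟩ = Σ_{α ∈ Λ} μ_a^α · conj(μ_b^α) · ⟨W_i^α η_a^α, W_j^α η_b^α⟩.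 -/
open scoped BigOperators

/-! Take the direct sum. The index set `Σ α, Fin (m α)` of `⊕_α ℂ^{m_α}` is enumerated as
`Fin M`; `U_j`, `V_j` are the block-diagonal unitaries `⊕_α u_j^α`, `⊕_α v_j^α`, and `ζ_a` is the
vectorization of the block-diagonal matrix `⊕_α μ_a^α η_a^α`. Vectorization turns `P ⊗ Q` into
`X ↦ Q X Pᵀ` and the inner product into `⟨vec X, vec Y⟩ = tr (Y* X)`. Block-diagonal matrices are
closed under products, transposes and adjoints, so every `W_i` acts block by block on `ζ_a`,
and the trace splits as the sum of the traces of the blocks. -/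

open Matrix
open scoped Kronecker

section Inner

variable {ι ι' : Type*} [Fintype ι] [Fintype ι']

lemma cInner_comp_equiv (σ : ι' ≃ ι) (x y : ι → ℂ) : cInner (x ∘ σ) (y ∘ σ) = cInner x y :=
  Equiv.sum_comp σ fun t => x t * (starRingEnd ℂ) (y t)

lemma cInner_smul_smul (c d : ℂ) (x y : ι → ℂ) :
    cInner (c • x) (d • y) = c * (starRingEnd ℂ) d * cInner x y := by
  simp only [cInner, Finset.mul_sum, Pi.smul_apply, smul_eq_mul, map_mul]
  exact Finset.sum_congr rfl fun _ _ => by ring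

lemma cInner_vec {κ : Type*} [Fintype κ] (X Y : Matrix ι κ ℂ) :
    cInner (vec X) (vec Y) = trace (Yᴴ * X) := by
  rw [← star_vec_dotProduct_vec, dotProduct_comm]
  rfl

end Inner

section BlockDiagonal

variable {Λ : Type*} [Fintype Λ] [DecidableEq Λ] {ι κ : Λ → Type*}
  [∀ α, Fintype (ι α)] [∀ α, Fintype (κ α)]

lemma cInner_vec_blockDiagonal' (X Y : ∀ α, Matrix (ι α) (κ α) ℂ) :
    cInner (vec (blockDiagonal' X)) (vec (blockDiagonal' Y)) =
      ∑ α, cInner (vec (X α)) (vec (Y α)) := by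
  simp only [cInner_vec, blockDiagonal'_conjTranspose, ← blockDiagonal'_mul, trace_blockDiagonal']

lemma cInner_kronecker_blockDiagonal'_mulVec (P Q P' Q' X Y : ∀ α, Matrix (ι α) (ι α) ℂ) :
    cInner ((blockDiagonal' P ⊗ₖ blockDiagonal' Q) *ᵥ vec (blockDiagonal' X))
        ((blockDiagonal' P' ⊗ₖ blockDiagonal' Q') *ᵥ vec (blockDiagonal' Y)) =
      ∑ α, cInner ((P α ⊗ₖ Q α) *ᵥ vec (X α)) ((P' α ⊗ₖ Q' α) *ᵥ vec (Y α)) := by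
  simp only [kronecker_mulVec_vec, blockDiagonal'_transpose, ← blockDiagonal'_mul,
    cInner_vec_blockDiagonal']

end BlockDiagonal

section TensorFactors

variable {X Y : Type*} [One X] [One Y] (n : ℕ)

def tensorFormLeft (f : Fin n → X) (i : Fin (2 * n + 1)) : X :=
  if _h0 : (i : ℕ) = 0 then 1
  else if _hn : (i : ℕ) ≤ n then f ⟨(i : ℕ) - 1, by omega⟩
  else 1

def tensorFormRight (f : Fin n → X) (i : Fin (2 * n + 1)) : X :=
  if _h0 : (i : ℕ) = 0 then 1
  else if _hn : (i : ℕ) ≤ n then 1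
  else f ⟨(i : ℕ) - n - 1, by have := i.isLt; omega⟩

variable {n}

lemma apply_tensorFormLeft (φ : X → Y) (hφ : φ 1 = 1) (f : Fin n → X) (i : Fin (2 * n + 1)) :
    φ (tensorFormLeft n f i) = tensorFormLeft n (φ ∘ f) i := by
  unfold tensorFormLeft
  split_ifs <;> simp [hφ]

lemma apply_tensorFormRight (φ : X → Y) (hφ : φ 1 = 1) (f : Fin n → X) (i : Fin (2 * n + 1)) :
    φ (tensorFormRight n f i) = tensorFormRight n (φ ∘ f) i := by
  unfold tensorFormRight
  split_ifs <;> simp [hφ]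

end TensorFactors

lemma tensorFormUnitaries_eq_kronecker {n m : ℕ} (u v : Fin n → unitaryGroup (Fin m) ℂ)
    (i : Fin (2 * n + 1)) :
    tensorFormUnitaries n m u v i =
      tensorFormLeft n (fun j => (u j : Matrix (Fin m) (Fin m) ℂ)) i ⊗ₖ
        tensorFormRight n (fun j => (v j : Matrix (Fin m) (Fin m) ℂ)) i := by
  unfold tensorFormUnitaries tensorFormLeft tensorFormRight
  split_ifs <;> simp

section Unitary

variable {R : Type*} [CommRing R] [StarRing R]

lemma reindex_mem_unitaryGroup {ι κ : Type*} [Fintype ι] [DecidableEq ι] [Fintype κ]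
    [DecidableEq κ] (e : ι ≃ κ) {A : Matrix ι ι R} (hA : A ∈ unitaryGroup ι R) :
    reindex e e A ∈ unitaryGroup κ R := by
  rw [mem_unitaryGroup_iff'] at hA ⊢
  rw [reindex_apply, star_eq_conjTranspose, conjTranspose_submatrix, submatrix_mul_equiv,
    ← star_eq_conjTranspose, hA, submatrix_one_equiv]

lemma blockDiagonal'_mem_unitaryGroup {Λ : Type*} [Fintype Λ] [DecidableEq Λ] {ι : Λ → Type*}
    [∀ α, Fintype (ι α)] [∀ α, DecidableEq (ι α)] (u : ∀ α, unitaryGroup (ι α) R) :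
    blockDiagonal' (fun α => (u α : Matrix (ι α) (ι α) R)) ∈ unitaryGroup (Σ α, ι α) R := by
  rw [mem_unitaryGroup_iff', star_eq_conjTranspose, blockDiagonal'_conjTranspose,
    ← blockDiagonal'_mul]
  simp_rw [← star_eq_conjTranspose, UnitaryGroup.star_mul_self]
  exact blockDiagonal'_one

end Unitary

section DirectSum

variable {Λ : Type*} [Fintype Λ] [DecidableEq Λ]

def blockDiagonalUnitary {R : Type*} [CommRing R] [StarRing R] {ι : Λ → Type*}
    [∀ α, Fintype (ι α)] [∀ α, DecidableEq (ι α)] {κ : Type*} [Fintype κ] [DecidableEq κ]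
    (e : (Σ α, ι α) ≃ κ) (u : ∀ α, unitaryGroup (ι α) R) : unitaryGroup κ R :=
  ⟨reindex e e (blockDiagonal' fun α => u α),
    reindex_mem_unitaryGroup e (blockDiagonal'_mem_unitaryGroup u)⟩

lemma tensorFormUnitaries_blockDiagonalUnitary {n M : ℕ} {m : Λ → ℕ}
    (e : (Σ α, Fin (m α)) ≃ Fin M) (u v : ∀ α, Fin n → unitaryGroup (Fin (m α)) ℂ)
    (i : Fin (2 * n + 1)) :
    tensorFormUnitaries n M (fun j => blockDiagonalUnitary e fun α => u α j)
        (fun j => blockDiagonalUnitary e fun α => v α j) i =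
      reindex (e.prodCongr e) (e.prodCongr e)
        (blockDiagonal' (fun α => tensorFormLeft n (fun j => (u α j : Matrix _ _ ℂ)) i) ⊗ₖ
          blockDiagonal' (fun α => tensorFormRight n (fun j => (v α j : Matrix _ _ ℂ)) i)) := by
  set φ : (∀ α, Matrix (Fin (m α)) (Fin (m α)) ℂ) → Matrix (Fin M) (Fin M) ℂ :=
    fun F => reindex e e (blockDiagonal' F)
  have hφ : φ 1 = 1 := by simp [φ, blockDiagonal'_one]
  have hL : tensorFormLeft n (fun j α => (u α j : Matrix (Fin (m α)) (Fin (m α)) ℂ)) i =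
      fun α => tensorFormLeft n (fun j => (u α j : Matrix _ _ ℂ)) i :=
    funext fun α => apply_tensorFormLeft (X := ∀ β, Matrix (Fin (m β)) (Fin (m β)) ℂ) (· α) rfl _ i
  have hR : tensorFormRight n (fun j α => (v α j : Matrix (Fin (m α)) (Fin (m α)) ℂ)) i =
      fun α => tensorFormRight n (fun j => (v α j : Matrix _ _ ℂ)) i :=
    funext fun α => apply_tensorFormRight (X := ∀ β, Matrix (Fin (m β)) (Fin (m β)) ℂ) (· α) rfl _ i
  rw [tensorFormUnitaries_eq_kronecker, ← kroneckerMap_reindex, ← hL, ← hR]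
  exact congrArg₂ _ (apply_tensorFormLeft φ hφ _ i).symm (apply_tensorFormRight φ hφ _ i).symm

end DirectSum

lemma cInner_reindex_mulVec {ι κ : Type*} [Fintype ι] [Fintype κ] (e : ι ≃ κ)
    (A B : Matrix ι ι ℂ) (x y : ι → ℂ) :
    cInner (reindex e e A *ᵥ (x ∘ e.symm)) (reindex e e B *ᵥ (y ∘ e.symm)) =
      cInner (A *ᵥ x) (B *ᵥ y) := by
  simp only [reindex_apply, submatrix_mulVec_equiv, Equiv.symm_symm, Function.comp_assoc,
    Equiv.symm_comp_self, Function.comp_id, cInner_comp_equiv]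

theorem statement2_general (n k : ℕ)
    (Λ : Type*) [Fintype Λ]
    (m : Λ → ℕ)
    (u v : (α : Λ) → Fin n → Matrix.unitaryGroup (Fin (m α)) ℂ)
    (η : (α : Λ) → Fin k → (Fin (m α) × Fin (m α)) → ℂ)
    (μ : Λ → Fin k → ℂ) :
    ∃ (M : ℕ), 1 ≤ M ∧
      ∃ (U V : Fin n → Matrix.unitaryGroup (Fin M) ℂ)
        (ζ : Fin k → (Fin M × Fin M) → ℂ),
        ∀ (i j : Fin (2 * n + 1)) (a b : Fin k),
          cInner ((tensorFormUnitaries n M U V i).mulVec (ζ a))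
              ((tensorFormUnitaries n M U V j).mulVec (ζ b)) =
            ∑ α, μ α a * (starRingEnd ℂ) (μ α b) *
              cInner ((tensorFormUnitaries n (m α) (u α) (v α) i).mulVec (η α a))
                ((tensorFormUnitaries n (m α) (u α) (v α) j).mulVec (η α b)) := by
  classical
  rcases isEmpty_or_nonempty (Σ α, Fin (m α)) with hS | hS
  · refine ⟨1, le_rfl, 1, 1, 0, fun i j a b => ?_⟩
    have := isEmpty_sigma.mp hS
    simp [cInner]
  let e := Fintype.equivFin (Σ α, Fin (m α))
  -- `η α a` is the vectorization of the matrix `of fun q p => η α a (p, q)`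
  refine ⟨_, Fintype.card_pos, fun j => blockDiagonalUnitary e fun α => u α j,
    fun j => blockDiagonalUnitary e fun α => v α j,
    fun a => vec (blockDiagonal' fun α => μ α a • of fun q p => η α a (p, q)) ∘
      (e.prodCongr e).symm, fun i j a b => ?_⟩
  rw [tensorFormUnitaries_blockDiagonalUnitary, tensorFormUnitaries_blockDiagonalUnitary,
    cInner_reindex_mulVec, cInner_kronecker_blockDiagonal'_mulVec]
  refine Finset.sum_congr rfl fun α _ => ?_
  rw [tensorFormUnitaries_eq_kronecker, tensorFormUnitaries_eq_kronecker, vec_smul, vec_smul,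
    mulVec_smul, mulVec_smul, cInner_smul_smul]
  rfl

/-- Lemma 1, finite-dimensional form: direct sums of triplets in
tensor position are in tensor position; the Gram data of the weighted direct sum
is the corresponding weighted sum of the Gram data. -/
theorem statement2 (n k : ℕ) (hn : 1 ≤ n) (hk : 1 ≤ k)
    (Λ : Type*) [Fintype Λ]
    (m : Λ → ℕ) (hm : ∀ α, 1 ≤ m α)
    (u v : (α : Λ) → Fin n → Matrix.unitaryGroup (Fin (m α)) ℂ)
    (η : (α : Λ) → Fin k → (Fin (m α) × Fin (m α)) → ℂ)
    (μ : Λ → Fin k → ℂ) :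
    ∃ (M : ℕ), 1 ≤ M ∧
      ∃ (U V : Fin n → Matrix.unitaryGroup (Fin M) ℂ)
        (ζ : Fin k → (Fin M × Fin M) → ℂ),
        ∀ (i j : Fin (2 * n + 1)) (a b : Fin k),
          cInner ((tensorFormUnitaries n M U V i).mulVec (ζ a))
              ((tensorFormUnitaries n M U V j).mulVec (ζ b)) =
            ∑ α, μ α a * (starRingEnd ℂ) (μ α b) *
              cInner ((tensorFormUnitaries n (m α) (u α) (v α) i).mulVec (η α a))
                ((tensorFormUnitaries n (m α) (u α) (v α) j).mulVec (η α b)) :=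
  statement2_general n k Λ m u v η μ
end
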